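/- arXiv:1604.01934 — 2 statements merged into one kernel-verified Lean document; each statement's English description precedes it below -/
import Mathlib

section
/- Let G be a fullerene graph with dual G*. If every two faces of G are at distance at most k in G*, then diam(G) ≤ 2k + 3. -/
/-- A (spherical) plane graph, given combinatorially: a connected graph `G`
together with a family of facial closed walks, indexed by `F`, such that each
edge of `G` lies on exactly two faces (counted with multiplicity) and Euler's
formula `V − E + F = 2` holds. -/
structure PlaneGraphWithFaces (V F : Type) [Fintype V] [DecidableEq V]
    [Fintype F] (G : SimpleGraph V) (boundary : F → Σ v : V, G.Walk v v) :
    Prop where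
  conn : G.Connected
  faceCycle : ∀ f : F, (boundary f).2.IsCycle
  edgeTwice : ∀ e ∈ G.edgeSet, (∑ f : F, (boundary f).2.edges.count e) = 2
  euler : (Fintype.card V : ℤ) - Nat.card G.edgeSet + Fintype.card F = 2

/-- The planar dual graph: its vertices are the faces of `G`, two faces being
adjacent when they share an edge. -/
def dualGraph {V F : Type} (G : SimpleGraph V)
    (boundary : F → Σ v : V, G.Walk v v) : SimpleGraph F :=
  SimpleGraph.fromRel fun f g =>
    ∃ e, e ∈ (boundary f).2.edges ∧ e ∈ (boundary g).2.edges

/-- A fullerene graph, presented as a combinatorial plane graph: cubic,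
bridgeless, with all faces pentagons or hexagons. -/
structure IsFullerene (V F : Type) [Fintype V] [DecidableEq V] [Fintype F]
    (G : SimpleGraph V) (boundary : F → Σ v : V, G.Walk v v)
    extends PlaneGraphWithFaces V F G boundary : Prop where
  cubic : ∀ v : V, (G.neighborSet v).ncard = 3
  bridgeless : ∀ e ∈ G.edgeSet, ¬ G.IsBridge e
  faceSize : ∀ f : F, (boundary f).2.length = 5 ∨ (boundary f).2.length = 6

/-! Faces through a common vertex share an edge, since a cubic vertex has only three edges and
each face through it uses two of them; as every edge lies on a face, the dual graph is connected
(which matters: `dist` is `0` between unreachable vertices). On a closed walk of length at most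
`6`, some endpoint of each edge is within distance `2` of any given vertex, so a dual walk of
length `k` starting at a face through `A` lifts to a walk of length at most `2 k` from `A` to a
vertex of the final face, and any two vertices of that face are within distance `3`. -/

open SimpleGraph

namespace SimpleGraph.Walk

variable {V : Type} {G : SimpleGraph V}

lemma exists_append_of_mem_edges {a b x y : V} (w : G.Walk a b) (he : s(x, y) ∈ w.edges) :
    (∃ (p : G.Walk a x) (q : G.Walk y b), p.length + q.length + 1 = w.length) ∨
    (∃ (p : G.Walk a y) (q : G.Walk x b), p.length + q.length + 1 = w.length) := by
  induction w with
  | nil => simp at he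
  | cons h p ih =>
    rcases List.mem_cons.mp he with he | he
    · rcases Sym2.eq_iff.mp he with ⟨rfl, rfl⟩ | ⟨rfl, rfl⟩
      · exact Or.inl ⟨nil, p, by simp⟩
      · exact Or.inr ⟨nil, p, by simp⟩
    · rcases ih he with ⟨p', q, hl⟩ | ⟨p', q, hl⟩
      · exact Or.inl ⟨cons h p', q, by simp only [length_cons]; omega⟩
      · exact Or.inr ⟨cons h p', q, by simp only [length_cons]; omega⟩

lemma IsCycle.exists_ne_mem_edges {a v : V} {c : G.Walk a a} (hc : c.IsCycle)
    (hv : v ∈ c.support) : ∃ w₁ w₂, w₁ ≠ w₂ ∧ s(v, w₁) ∈ c.edges ∧ s(v, w₂) ∈ c.edges := by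
  obtain ⟨w₁, w₂, hne, heq⟩ := Set.ncard_eq_two.mp (hc.ncard_neighborSet_toSubgraph_eq_two hv)
  have hmem : ∀ w ∈ c.toSubgraph.neighborSet v, s(v, w) ∈ c.edges :=
    fun _ hw => adj_toSubgraph_iff_mem_edges.mp hw
  exact ⟨w₁, w₂, hne, hmem w₁ (by simp [heq]), hmem w₂ (by simp [heq])⟩

variable [DecidableEq V]

lemma exists_walk_of_mem_support {a v w : V} (c : G.Walk a a) (hv : v ∈ c.support)
    (hw : w ∈ c.support) : ∃ p : G.Walk v w, 2 * p.length ≤ c.length := by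
  set c' := c.rotate v hv
  have hw' : w ∈ c'.support := (mem_support_rotate_iff c v hv).mpr hw
  have hsplit := congrArg length (c'.take_spec hw')
  rw [length_append, length_rotate] at hsplit
  rcases le_total (c'.takeUntil w hw').length (c'.dropUntil w hw').length with hle | hle
  · exact ⟨c'.takeUntil w hw', by omega⟩
  · exact ⟨(c'.dropUntil w hw').reverse, by rw [length_reverse]; omega⟩

lemma exists_walk_of_mem_edges {a v x y : V} (c : G.Walk a a) (hv : v ∈ c.support)
    (he : s(x, y) ∈ c.edges) :
    (∃ p : G.Walk v x, 2 * p.length < c.length) ∨ (∃ p : G.Walk v y, 2 * p.length < c.length) := by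
  set c' := c.rotate v hv
  have he' : s(x, y) ∈ c'.edges := (rotate_edges c v hv).perm.mem_iff.mpr he
  have hlen : c'.length = c.length := length_rotate c v hv
  rcases exists_append_of_mem_edges c' he' with ⟨p, q, hl⟩ | ⟨p, q, hl⟩
  · rcases le_total p.length q.length with hle | hle
    · exact Or.inl ⟨p, by omega⟩
    · exact Or.inr ⟨q.reverse, by rw [length_reverse]; omega⟩
  · rcases le_total p.length q.length with hle | hle
    · exact Or.inr ⟨p, by omega⟩
    · exact Or.inl ⟨q.reverse, by rw [length_reverse]; omega⟩

lemma IsCycle.exists_mem_edges_of_mem_support [Finite V] {a b v : V} {c : G.Walk a a}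
    {d : G.Walk b b} (hc : c.IsCycle) (hd : d.IsCycle) (hvc : v ∈ c.support)
    (hvd : v ∈ d.support) (hdeg : (G.neighborSet v).ncard ≤ 3) :
    ∃ e ∈ c.edges, e ∈ d.edges := by
  obtain ⟨w₁, w₂, h12, hw₁, hw₂⟩ := hc.exists_ne_mem_edges hvc
  obtain ⟨w₃, w₄, h34, hw₃, hw₄⟩ := hd.exists_ne_mem_edges hvd
  by_contra! hdisj
  have hne : ∀ {w w'}, s(v, w) ∈ c.edges → s(v, w') ∈ d.edges → w ≠ w' :=
    fun hw hw' heq => hdisj _ hw (heq ▸ hw')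
  have hsub : ({w₁, w₂, w₃, w₄} : Set V) ⊆ G.neighborSet v := by
    rintro w (rfl | rfl | rfl | rfl)
    exacts [c.adj_of_mem_edges hw₁, c.adj_of_mem_edges hw₂, d.adj_of_mem_edges hw₃,
      d.adj_of_mem_edges hw₄]
  have hcard : ({w₁, w₂, w₃, w₄} : Set V).ncard = 4 := by
    rw [Set.ncard_insert_of_notMem (by simp [h12, hne hw₁ hw₃, hne hw₁ hw₄]),
      Set.ncard_insert_of_notMem (by simp [hne hw₂ hw₃, hne hw₂ hw₄]), Set.ncard_pair h34]
  have := Set.ncard_le_ncard hsub (Set.toFinite _)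
  omega

end SimpleGraph.Walk

section Faces

variable {V F : Type} {G : SimpleGraph V} {boundary : F → Σ v : V, G.Walk v v}

lemma dualGraph_adj {f g : F} : (dualGraph G boundary).Adj f g ↔
    f ≠ g ∧ ∃ e ∈ (boundary f).2.edges, e ∈ (boundary g).2.edges := by
  simp only [dualGraph, fromRel_adj, and_congr_right_iff]
  exact fun _ => ⟨fun h => h.elim id fun ⟨e, hg, hf⟩ => ⟨e, hf, hg⟩, Or.inl⟩

variable [DecidableEq V]

lemma exists_walk_of_dualGraph_walk {r : ℕ} (hlen : ∀ f, (boundary f).2.length ≤ 2 * r + 2)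
    {f g : F} (w : (dualGraph G boundary).Walk f g) {A : V} (hA : A ∈ (boundary f).2.support) :
    ∃ B ∈ (boundary g).2.support, ∃ p : G.Walk A B, p.length ≤ r * w.length := by
  induction w generalizing A with
  | nil => exact ⟨A, hA, Walk.nil, by simp⟩
  | @cons f f' g hadj w ih =>
    obtain ⟨-, ⟨x, y⟩, hef, hef'⟩ := dualGraph_adj.mp hadj
    obtain ⟨z, hz, p, hp⟩ : ∃ z ∈ (boundary f').2.support, ∃ p : G.Walk A z, p.length ≤ r := by
      have := hlen f
      rcases Walk.exists_walk_of_mem_edges _ hA hef with ⟨p, hp⟩ | ⟨p, hp⟩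
      · exact ⟨x, Walk.fst_mem_support_of_mem_edges _ hef', p, by omega⟩
      · exact ⟨y, Walk.snd_mem_support_of_mem_edges _ hef', p, by omega⟩
    obtain ⟨B, hB, q, hq⟩ := ih hz
    refine ⟨B, hB, p.append q, ?_⟩
    rw [Walk.length_append, Walk.length_cons, mul_add_one]
    omega

variable [Fintype V] [Fintype F]

lemma PlaneGraphWithFaces.exists_mem_edges (h : PlaneGraphWithFaces V F G boundary) {e : Sym2 V}
    (he : e ∈ G.edgeSet) : ∃ f, e ∈ (boundary f).2.edges := by
  by_contra! hc
  have := h.edgeTwice e he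
  simp [List.count_eq_zero.mpr (hc _)] at this

namespace IsFullerene

lemma length_boundary_le (h : IsFullerene V F G boundary) (f : F) :
    (boundary f).2.length ≤ 6 := by
  rcases h.faceSize f with h' | h' <;> omega

lemma exists_mem_support (h : IsFullerene V F G boundary) (v : V) :
    ∃ f, v ∈ (boundary f).2.support := by
  obtain ⟨u, hu⟩ := Set.nonempty_of_ncard_ne_zero (s := G.neighborSet v) (by simp [h.cubic v])
  obtain ⟨f, hf⟩ := h.exists_mem_edges (G.mem_edgeSet.mpr hu)
  exact ⟨f, Walk.fst_mem_support_of_mem_edges _ hf⟩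

lemma dualGraph_reachable_of_mem_support (h : IsFullerene V F G boundary) {f g : F} {v : V}
    (hf : v ∈ (boundary f).2.support) (hg : v ∈ (boundary g).2.support) :
    (dualGraph G boundary).Reachable f g := by
  rcases eq_or_ne f g with rfl | hfg
  · rfl
  obtain ⟨e, hef, heg⟩ := (h.faceCycle f).exists_mem_edges_of_mem_support (h.faceCycle g) hf hg
    (h.cubic v).le
  exact (dualGraph_adj.mpr ⟨hfg, e, hef, heg⟩).reachable

lemma dualGraph_preconnected (h : IsFullerene V F G boundary) :
    (dualGraph G boundary).Preconnected := by
  suffices key : ∀ {A B : V} (p : G.Walk A B) {f g : F}, A ∈ (boundary f).2.support →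
      B ∈ (boundary g).2.support → (dualGraph G boundary).Reachable f g by
    intro f g
    obtain ⟨p⟩ := h.conn.preconnected (boundary f).1 (boundary g).1
    exact key p (boundary f).2.start_mem_support (boundary g).2.start_mem_support
  intro A B p
  induction p with
  | nil => exact h.dualGraph_reachable_of_mem_support
  | cons hadj p ih =>
    intro f g hA hB
    obtain ⟨f', hf'⟩ := h.exists_mem_edges (G.mem_edgeSet.mpr hadj)
    have hAf' := Walk.fst_mem_support_of_mem_edges _ hf'
    exact (h.dualGraph_reachable_of_mem_support hA hAf').trans
      (ih (Walk.snd_mem_support_of_mem_edges _ hf') hB)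

end IsFullerene

end Faces

/-- If every two faces of a fullerene graph `G` are at distance at most `k`
in the dual graph `G*`, then `diam(G) ≤ 2k + 3`. -/
theorem stmt_14 {V F : Type} [Fintype V] [DecidableEq V] [Fintype F]
    (G : SimpleGraph V) (boundary : F → Σ v : V, G.Walk v v)
    (h : IsFullerene V F G boundary) (k : ℕ)
    (hdual : ∀ u v : F, (dualGraph G boundary).dist u v ≤ k) :
    G.diam ≤ 2 * k + 3 := by
  refine ENat.toNat_le_of_le_natCast (ediam_le_of_edist_le fun u v => ?_)
  obtain ⟨f, hu⟩ := h.exists_mem_support u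
  obtain ⟨g, hv⟩ := h.exists_mem_support v
  obtain ⟨w, hw⟩ := (h.dualGraph_preconnected f g).exists_walk_length_eq_dist
  obtain ⟨B, hB, p, hp⟩ := exists_walk_of_dualGraph_walk (r := 2) h.length_boundary_le w hu
  obtain ⟨q, hq⟩ := Walk.exists_walk_of_mem_support (boundary g).2 hB hv
  have := hdual f g
  have := h.length_boundary_le g
  calc G.edist u v ≤ (p.append q).length := edist_le _
    _ ≤ (2 * k + 3 : ℕ) := by rw [Walk.length_append]; norm_cast; omega
end

section
/- In the triangulation D*_{r,t}, every vertex other than the two poles n and s has a neighbour of latitude one greater and a neighbour of latitude one less than its own. Consequently, every vertex of D*_{r,t} lies on some path of length 2r from n to s. -/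
/-!
Let `‖(x, y)‖ = max |x| |y| |x - y|`, the distance from the origin in the triangular lattice.
Measure the depth of a vertex of `D*_{r,t}` below `n` as `‖a‖` on the northern copy and
`2r - ‖b‖` on the southern one; this is well defined on the glued boundary and changes by at most
one along an edge. Every vertex other than `n` has a neighbour one level higher: step towards the
centre in the northern copy and away from it in the southern interior, a southern boundary vertex
being also a northern one. A function with these properties is the distance from `n`, and
symmetrically for `s`. Joining geodesics `n → v → s` gives a walk of length
`2r = dist(n, s)`, which is therefore a path.
-/

/-- The 6-regular triangular lattice: `(x,y)` is adjacent to
`(x±1,y)`, `(x,y±1)`, `(x+1,y+1)` and `(x−1,y−1)`. -/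
def triLattice : SimpleGraph (ℤ × ℤ) :=
  SimpleGraph.fromRel fun a b =>
    (b.1 - a.1, b.2 - a.2) ∈ ({(1, 0), (0, 1), (1, 1)} : Set (ℤ × ℤ))

/-- The ball of radius `r` around the origin of the triangular lattice. -/
def ball (r : ℕ) : Set (ℤ × ℤ) := {v | triLattice.dist (0, 0) v ≤ r}

/-- The sphere of radius `r` around the origin (boundary of the ball). -/
def sphere (r : ℕ) : Set (ℤ × ℤ) := {v | triLattice.dist (0, 0) v = r}

/-- Vertices of one copy of the ball of radius `r`. -/
abbrev BallV (r : ℕ) := {v : ℤ × ℤ // v ∈ ball r}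

/-- The gluing relation: the boundary vertex `a` of the first (northern) copy
of the ball is identified with the boundary vertex `e a` of the second
(southern) copy; `e` encodes the offset-`t` rotation of the boundary cycle. -/
def glueRel (r : ℕ) (e : ℤ × ℤ → ℤ × ℤ) :
    (BallV r ⊕ BallV r) → (BallV r ⊕ BallV r) → Prop := fun x y =>
  ∃ a b : BallV r, (a : ℤ × ℤ) ∈ sphere r ∧ (b : ℤ × ℤ) = e a ∧
    x = Sum.inl a ∧ y = Sum.inr b

/-- The vertex set of `D*_{r,t}`: two disjoint copies of the radius-`r` ball
glued along their boundary via `e`. -/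
def GluedV (r : ℕ) (e : ℤ × ℤ → ℤ × ℤ) := Quot (glueRel r e)

/-- The triangulation `D*_{r,t}`: edges come from the edges of the two copies
of the ball. -/
def Dstar (r : ℕ) (e : ℤ × ℤ → ℤ × ℤ) : SimpleGraph (GluedV r e) :=
  SimpleGraph.fromRel fun x y => ∃ a b : BallV r,
    triLattice.Adj a.1 b.1 ∧
      ((x = Quot.mk _ (Sum.inl a) ∧ y = Quot.mk _ (Sum.inl b)) ∨
       (x = Quot.mk _ (Sum.inr a) ∧ y = Quot.mk _ (Sum.inr b)))

/-- The north pole: the centre of the first copy of the ball. -/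
def npole (r : ℕ) (e : ℤ × ℤ → ℤ × ℤ) : GluedV r e :=
  Quot.mk _ (Sum.inl ⟨(0, 0), by simp [ball, SimpleGraph.dist_self]⟩)

/-- The south pole: the centre of the second copy of the ball. -/
def spole (r : ℕ) (e : ℤ × ℤ → ℤ × ℤ) : GluedV r e :=
  Quot.mk _ (Sum.inr ⟨(0, 0), by simp [ball, SimpleGraph.dist_self]⟩)

/-- `e` preserves adjacency along the boundary cycle (as the rotation by `t`
does). -/
def SphereAdjPreserving (r : ℕ) (e : ℤ × ℤ → ℤ × ℤ) : Prop :=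
  ∀ a ∈ sphere r, ∀ b ∈ sphere r, (triLattice.Adj a b ↔ triLattice.Adj (e a) (e b))

/-- A corner of the ball: a boundary vertex with only 3 neighbours in the
ball. -/
def Corner (r : ℕ) (v : ℤ × ℤ) : Prop :=
  v ∈ sphere r ∧ (triLattice.neighborSet v ∩ ball r).ncard = 3

namespace SimpleGraph

variable {V : Type*} {G : SimpleGraph V} {f : V → ℕ} {o : V}

lemma le_add_length_of_adj_le (hf : ∀ ⦃u v⦄, G.Adj u v → f u ≤ f v + 1) {u v : V}
    (p : G.Walk u v) : f u ≤ f v + p.length := by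
  induction p with
  | nil => simp
  | cons h _ ih =>
    have := hf h
    rw [Walk.length_cons]
    omega

lemma exists_walk_length_eq_of_descent (hzero : ∀ v, f v = 0 ↔ v = o)
    (hdesc : ∀ v, v ≠ o → ∃ w, G.Adj v w ∧ f w + 1 = f v) (v : V) :
    ∃ p : G.Walk v o, p.length = f v := by
  induction hn : f v generalizing v with
  | zero =>
    obtain rfl := (hzero v).mp hn
    exact ⟨Walk.nil, rfl⟩
  | succ n ih =>
    obtain ⟨w, hvw, hw⟩ := hdesc v fun hvo => by simp [(hzero v).mpr hvo] at hn
    obtain ⟨p, hp⟩ := ih w (by omega)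
    exact ⟨p.cons hvw, by rw [Walk.length_cons, hp]⟩

lemma dist_eq_of_descent (hf : ∀ ⦃u v⦄, G.Adj u v → f u ≤ f v + 1)
    (hzero : ∀ v, f v = 0 ↔ v = o) (hdesc : ∀ v, v ≠ o → ∃ w, G.Adj v w ∧ f w + 1 = f v)
    (v : V) : G.dist o v = f v := by
  obtain ⟨p, hp⟩ := exists_walk_length_eq_of_descent hzero hdesc v
  refine le_antisymm (hp ▸ dist_comm ▸ dist_le p) ?_
  obtain ⟨q, hq⟩ := p.reverse.reachable.exists_walk_length_eq_dist
  have := le_add_length_of_adj_le hf q.reverse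
  rw [Walk.length_reverse, (hzero o).mpr rfl] at this
  omega

end SimpleGraph

/-- The graph distance from the origin in `triLattice` (see `triLattice_dist_eq_hexNorm`). -/
def hexNorm (v : ℤ × ℤ) : ℕ := max v.1.natAbs (max v.2.natAbs (v.1 - v.2).natAbs)

lemma hexNorm_eq_zero_iff {v : ℤ × ℤ} : hexNorm v = 0 ↔ v = (0, 0) := by
  obtain ⟨x, y⟩ := v
  simp only [hexNorm, Prod.mk.injEq]
  omega

lemma triLattice_adj_iff {a b : ℤ × ℤ} : triLattice.Adj a b ↔ hexNorm (b - a) = 1 := by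
  obtain ⟨x, y⟩ := a
  obtain ⟨z, w⟩ := b
  simp only [triLattice, SimpleGraph.fromRel_adj, Set.mem_insert_iff, Set.mem_singleton_iff,
    Prod.mk.injEq, ne_eq, hexNorm, Prod.mk_sub_mk]
  omega

lemma hexNorm_le_of_adj {a b : ℤ × ℤ} (h : triLattice.Adj a b) : hexNorm a ≤ hexNorm b + 1 := by
  rw [triLattice_adj_iff] at h
  obtain ⟨x, y⟩ := a
  obtain ⟨z, w⟩ := b
  simp only [hexNorm, Prod.mk_sub_mk] at h ⊢
  omega

def stepIn (v : ℤ × ℤ) : ℤ × ℤ :=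
  if 0 < v.1 ∧ 0 < v.2 then (v.1 - 1, v.2 - 1)
  else if v.1 < 0 ∧ v.2 < 0 then (v.1 + 1, v.2 + 1)
  else if 0 < v.1 then (v.1 - 1, v.2)
  else if v.1 < 0 then (v.1 + 1, v.2)
  else if 0 < v.2 then (v.1, v.2 - 1)
  else (v.1, v.2 + 1)

def stepOut (v : ℤ × ℤ) : ℤ × ℤ :=
  if 0 ≤ v.1 ∧ 0 ≤ v.2 then (v.1 + 1, v.2 + 1)
  else if v.1 ≤ 0 ∧ v.2 ≤ 0 then (v.1 - 1, v.2 - 1)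
  else if 0 < v.1 then (v.1 + 1, v.2)
  else (v.1, v.2 + 1)

lemma triLattice_adj_stepIn (v : ℤ × ℤ) : triLattice.Adj v (stepIn v) := by
  rw [triLattice_adj_iff]
  obtain ⟨x, y⟩ := v
  simp only [stepIn, hexNorm]
  split_ifs <;> simp only [Prod.mk_sub_mk] <;> omega

lemma triLattice_adj_stepOut (v : ℤ × ℤ) : triLattice.Adj v (stepOut v) := by
  rw [triLattice_adj_iff]
  obtain ⟨x, y⟩ := v
  simp only [stepOut, hexNorm]
  split_ifs <;> simp only [Prod.mk_sub_mk] <;> omega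

lemma hexNorm_stepIn {v : ℤ × ℤ} (hv : v ≠ (0, 0)) : hexNorm (stepIn v) + 1 = hexNorm v := by
  obtain ⟨x, y⟩ := v
  simp only [ne_eq, Prod.mk.injEq] at hv
  simp only [stepIn, hexNorm]
  split_ifs <;> omega

lemma hexNorm_stepOut (v : ℤ × ℤ) : hexNorm (stepOut v) = hexNorm v + 1 := by
  obtain ⟨x, y⟩ := v
  simp only [stepOut, hexNorm]
  split_ifs <;> omega

lemma triLattice_dist_eq_hexNorm (v : ℤ × ℤ) : triLattice.dist (0, 0) v = hexNorm v :=
  SimpleGraph.dist_eq_of_descent (fun _ _ => hexNorm_le_of_adj) (fun _ => hexNorm_eq_zero_iff)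
    (fun v hv => ⟨stepIn v, triLattice_adj_stepIn v, hexNorm_stepIn hv⟩) v

lemma mem_ball_iff {r : ℕ} {v : ℤ × ℤ} : v ∈ ball r ↔ hexNorm v ≤ r := by
  rw [ball, Set.mem_ofPred_eq, triLattice_dist_eq_hexNorm]

lemma mem_sphere_iff {r : ℕ} {v : ℤ × ℤ} : v ∈ sphere r ↔ hexNorm v = r := by
  rw [sphere, Set.mem_ofPred_eq, triLattice_dist_eq_hexNorm]

namespace GluedV

variable {r : ℕ} {e : ℤ × ℤ → ℤ × ℤ}

def ofNorth (a : BallV r) : GluedV r e := Quot.mk _ (Sum.inl a)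

def ofSouth (b : BallV r) : GluedV r e := Quot.mk _ (Sum.inr b)

@[elab_as_elim]
lemma ind {motive : GluedV r e → Prop} (north : ∀ a, motive (ofNorth a))
    (south : ∀ b, motive (ofSouth b)) (v : GluedV r e) : motive v := by
  induction v using Quot.ind with
  | mk x => cases x with
    | inl a => exact north a
    | inr b => exact south b

lemma ofNorth_eq_ofSouth {a b : BallV r} (ha : a.1 ∈ sphere r) (hb : b.1 = e a.1) :
    (ofNorth a : GluedV r e) = ofSouth b :=
  Quot.sound ⟨a, b, ha, hb, rfl, rfl⟩

lemma eq_ofNorth_or_eq_ofSouth_of_lt (hsurj : Set.SurjOn e (sphere r) (sphere r)) (v : GluedV r e) :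
    (∃ a, v = ofNorth a) ∨ ∃ b : BallV r, hexNorm b.1 < r ∧ v = ofSouth b := by
  induction v using GluedV.ind with
  | north a => exact .inl ⟨a, rfl⟩
  | south b =>
    rcases (mem_ball_iff.mp b.2).lt_or_eq with hb | hb
    · exact .inr ⟨b, hb, rfl⟩
    · obtain ⟨a, ha, hab⟩ := hsurj (mem_sphere_iff.mpr hb)
      exact .inl ⟨⟨a, mem_ball_iff.mpr (mem_sphere_iff.mp ha).le⟩,
        (ofNorth_eq_ofSouth ha hab.symm).symm⟩

lemma eq_ofSouth_or_eq_ofNorth_of_lt (hmaps : Set.MapsTo e (sphere r) (sphere r)) (v : GluedV r e) :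
    (∃ b, v = ofSouth b) ∨ ∃ a : BallV r, hexNorm a.1 < r ∧ v = ofNorth a := by
  induction v using GluedV.ind with
  | south b => exact .inl ⟨b, rfl⟩
  | north a =>
    rcases (mem_ball_iff.mp a.2).lt_or_eq with ha | ha
    · exact .inr ⟨a, ha, rfl⟩
    · have ha := mem_sphere_iff.mpr ha
      exact .inl ⟨⟨e a, mem_ball_iff.mpr (mem_sphere_iff.mp (hmaps ha)).le⟩,
        ofNorth_eq_ofSouth ha rfl⟩

open Classical in
/-- The coordinate of a point in the southern copy of the ball, extended to the northern interior
by the northern coordinate; it separates the points of each copy. -/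
noncomputable def southCoord : GluedV r e → ℤ × ℤ :=
  Quot.lift (Sum.elim (fun a => if a.1 ∈ sphere r then e a.1 else a.1) (fun b => b.1)) (by
    rintro _ _ ⟨a, b, ha, hb, rfl, rfl⟩
    simp [ha, hb])

lemma ofSouth_injective : Function.Injective (ofSouth : BallV r → GluedV r e) :=
  fun _ _ h => Subtype.ext (congrArg southCoord h)

lemma ofNorth_injective (hmaps : Set.MapsTo e (sphere r) (sphere r))
    (hinj : Set.InjOn e (sphere r)) :
    Function.Injective (ofNorth : BallV r → GluedV r e) := by
  intro a a' h
  have h' : southCoord (ofNorth a : GluedV r e) = southCoord (ofNorth a') := congrArg _ h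
  apply Subtype.ext
  by_cases ha : a.1 ∈ sphere r <;> by_cases ha' : a'.1 ∈ sphere r <;>
    simp only [southCoord, ofNorth, Sum.elim_inl, ha, ha', if_true, if_false] at h'
  · exact hinj ha ha' h'
  · exact absurd (h' ▸ hmaps ha) ha'
  · exact absurd (h' ▸ hmaps ha') ha
  · exact h'

end GluedV

section Dstar

open GluedV

variable {r : ℕ} {e : ℤ × ℤ → ℤ × ℤ}

lemma dstar_adj_ofNorth (hmaps : Set.MapsTo e (sphere r) (sphere r)) (hinj : Set.InjOn e (sphere r))
    {a b : BallV r} (h : triLattice.Adj a.1 b.1) : (Dstar r e).Adj (ofNorth a) (ofNorth b) :=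
  (SimpleGraph.fromRel_adj _ _ _).mpr
    ⟨fun hab => h.ne (congrArg Subtype.val (ofNorth_injective hmaps hinj hab)),
      .inl ⟨a, b, h, .inl ⟨rfl, rfl⟩⟩⟩

lemma dstar_adj_ofSouth {a b : BallV r} (h : triLattice.Adj a.1 b.1) :
    (Dstar r e).Adj (ofSouth a) (ofSouth b) :=
  (SimpleGraph.fromRel_adj _ _ _).mpr
    ⟨fun hab => h.ne (congrArg Subtype.val (ofSouth_injective hab)),
      .inl ⟨a, b, h, .inr ⟨rfl, rfl⟩⟩⟩

lemma exists_of_dstar_adj {u v : GluedV r e} (h : (Dstar r e).Adj u v) :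
    ∃ a b : BallV r, triLattice.Adj a.1 b.1 ∧
      ((u = ofNorth a ∧ v = ofNorth b) ∨ (u = ofSouth a ∧ v = ofSouth b)) := by
  obtain ⟨-, ⟨a, b, hab, huv⟩ | ⟨a, b, hab, hvu⟩⟩ := (SimpleGraph.fromRel_adj _ _ _).mp h
  · exact ⟨a, b, hab, huv⟩
  · refine ⟨b, a, hab.symm, ?_⟩
    rcases hvu with ⟨rfl, rfl⟩ | ⟨rfl, rfl⟩
    exacts [.inl ⟨rfl, rfl⟩, .inr ⟨rfl, rfl⟩]

/-- In terms of the latitude `φ`, `northDepth v = r - φ v` and `southDepth v = r + φ v`. -/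
def northDepth (hmaps : Set.MapsTo e (sphere r) (sphere r)) : GluedV r e → ℕ :=
  Quot.lift (Sum.elim (fun a => hexNorm a.1) (fun b => 2 * r - hexNorm b.1)) (by
    rintro _ _ ⟨a, b, ha, hb, rfl, rfl⟩
    have hb : hexNorm b.1 = r := mem_sphere_iff.mp (hb ▸ hmaps ha)
    simp only [Sum.elim_inl, Sum.elim_inr, mem_sphere_iff.mp ha, hb]
    omega)

def southDepth (hmaps : Set.MapsTo e (sphere r) (sphere r)) : GluedV r e → ℕ :=
  Quot.lift (Sum.elim (fun a => 2 * r - hexNorm a.1) (fun b => hexNorm b.1)) (by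
    rintro _ _ ⟨a, b, ha, hb, rfl, rfl⟩
    have hb : hexNorm b.1 = r := mem_sphere_iff.mp (hb ▸ hmaps ha)
    simp only [Sum.elim_inl, Sum.elim_inr, mem_sphere_iff.mp ha, hb]
    omega)

variable (hmaps : Set.MapsTo e (sphere r) (sphere r))

@[simp] lemma northDepth_ofNorth (a : BallV r) : northDepth hmaps (ofNorth a) = hexNorm a.1 := rfl

@[simp] lemma northDepth_ofSouth (b : BallV r) :
    northDepth hmaps (ofSouth b) = 2 * r - hexNorm b.1 := rfl

@[simp] lemma southDepth_ofNorth (a : BallV r) :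
    southDepth hmaps (ofNorth a) = 2 * r - hexNorm a.1 := rfl

@[simp] lemma southDepth_ofSouth (b : BallV r) : southDepth hmaps (ofSouth b) = hexNorm b.1 := rfl

lemma northDepth_add_southDepth (v : GluedV r e) :
    northDepth hmaps v + southDepth hmaps v = 2 * r := by
  induction v using GluedV.ind with
  | north a =>
    have := mem_ball_iff.mp a.2
    simp only [northDepth_ofNorth, southDepth_ofNorth]
    omega
  | south b =>
    have := mem_ball_iff.mp b.2
    simp only [northDepth_ofSouth, southDepth_ofSouth]
    omega

lemma northDepth_le_of_adj {u v : GluedV r e} (h : (Dstar r e).Adj u v) :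
    northDepth hmaps u ≤ northDepth hmaps v + 1 := by
  obtain ⟨a, b, hab, ⟨rfl, rfl⟩ | ⟨rfl, rfl⟩⟩ := exists_of_dstar_adj h
  · exact hexNorm_le_of_adj hab
  · have := hexNorm_le_of_adj hab.symm
    have := mem_ball_iff.mp b.2
    simp only [northDepth_ofSouth]
    omega

lemma southDepth_le_of_adj {u v : GluedV r e} (h : (Dstar r e).Adj u v) :
    southDepth hmaps u ≤ southDepth hmaps v + 1 := by
  have := northDepth_le_of_adj hmaps h.symm
  have := northDepth_add_southDepth hmaps u
  have := northDepth_add_southDepth hmaps v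
  omega

lemma northDepth_eq_zero_iff (hsurj : Set.SurjOn e (sphere r) (sphere r)) {v : GluedV r e} :
    northDepth hmaps v = 0 ↔ v = npole r e := by
  refine ⟨fun hv => ?_, by rintro rfl; rfl⟩
  rcases eq_ofNorth_or_eq_ofSouth_of_lt hsurj v with ⟨⟨a, ha⟩, rfl⟩ | ⟨b, hb, rfl⟩
  · obtain rfl := hexNorm_eq_zero_iff.mp hv
    rfl
  · simp only [northDepth_ofSouth] at hv
    omega

lemma southDepth_eq_zero_iff {v : GluedV r e} : southDepth hmaps v = 0 ↔ v = spole r e := by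
  refine ⟨fun hv => ?_, by rintro rfl; rfl⟩
  rcases eq_ofSouth_or_eq_ofNorth_of_lt hmaps v with ⟨⟨b, hb⟩, rfl⟩ | ⟨a, ha, rfl⟩
  · obtain rfl := hexNorm_eq_zero_iff.mp hv
    rfl
  · simp only [southDepth_ofNorth] at hv
    omega

lemma exists_adj_northDepth_add_one_eq (hinj : Set.InjOn e (sphere r))
    (hsurj : Set.SurjOn e (sphere r) (sphere r))
    {v : GluedV r e} (hv : v ≠ npole r e) :
    ∃ w, (Dstar r e).Adj v w ∧ northDepth hmaps w + 1 = northDepth hmaps v := by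
  rcases eq_ofNorth_or_eq_ofSouth_of_lt hsurj v with ⟨a, rfl⟩ | ⟨b, hb, rfl⟩
  · have ha : a.1 ≠ (0, 0) := fun h0 => hv (congrArg ofNorth (Subtype.ext h0))
    have hin := hexNorm_stepIn ha
    refine ⟨ofNorth ⟨stepIn a.1, mem_ball_iff.mpr ?_⟩,
      dstar_adj_ofNorth hmaps hinj (triLattice_adj_stepIn _), hin⟩
    have := mem_ball_iff.mp a.2
    omega
  · have hout := hexNorm_stepOut b.1
    refine ⟨ofSouth ⟨stepOut b.1, mem_ball_iff.mpr (by omega)⟩,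
      dstar_adj_ofSouth (triLattice_adj_stepOut _), ?_⟩
    simp only [northDepth_ofSouth, hout]
    omega

lemma exists_adj_southDepth_add_one_eq (hinj : Set.InjOn e (sphere r)) {v : GluedV r e}
    (hv : v ≠ spole r e) :
    ∃ w, (Dstar r e).Adj v w ∧ southDepth hmaps w + 1 = southDepth hmaps v := by
  rcases eq_ofSouth_or_eq_ofNorth_of_lt hmaps v with ⟨b, rfl⟩ | ⟨a, ha, rfl⟩
  · have hb : b.1 ≠ (0, 0) := fun h0 => hv (congrArg ofSouth (Subtype.ext h0))
    have hin := hexNorm_stepIn hb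
    refine ⟨ofSouth ⟨stepIn b.1, mem_ball_iff.mpr ?_⟩,
      dstar_adj_ofSouth (triLattice_adj_stepIn _), hin⟩
    have := mem_ball_iff.mp b.2
    omega
  · have hout := hexNorm_stepOut a.1
    refine ⟨ofNorth ⟨stepOut a.1, mem_ball_iff.mpr (by omega)⟩,
      dstar_adj_ofNorth hmaps hinj (triLattice_adj_stepOut _), ?_⟩
    simp only [southDepth_ofNorth, hout]
    omega

end Dstar

theorem stmt_15_general (r : ℕ) (e : ℤ × ℤ → ℤ × ℤ)
    (he : Set.BijOn e (sphere r) (sphere r)) :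
    (∀ v : GluedV r e, v ≠ npole r e → v ≠ spole r e →
      (∃ w, (Dstar r e).Adj v w ∧
        (Dstar r e).dist (npole r e) w + 1 = (Dstar r e).dist (npole r e) v) ∧
      (∃ w, (Dstar r e).Adj v w ∧
        (Dstar r e).dist (spole r e) w + 1 = (Dstar r e).dist (spole r e) v)) ∧
    (∀ v : GluedV r e, ∃ p : (Dstar r e).Walk (npole r e) (spole r e),
      p.IsPath ∧ p.length = 2 * r ∧ v ∈ p.support) := by
  have hzeroN := fun v => northDepth_eq_zero_iff he.mapsTo he.surjOn (v := v)
  have hzeroS := fun v => southDepth_eq_zero_iff he.mapsTo (v := v)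
  have hdescN := fun v => exists_adj_northDepth_add_one_eq he.mapsTo he.injOn he.surjOn (v := v)
  have hdescS := fun v => exists_adj_southDepth_add_one_eq he.mapsTo he.injOn (v := v)
  have hdistN := SimpleGraph.dist_eq_of_descent
    (fun _ _ => northDepth_le_of_adj he.mapsTo) hzeroN hdescN
  have hdistS := SimpleGraph.dist_eq_of_descent
    (fun _ _ => southDepth_le_of_adj he.mapsTo) hzeroS hdescS
  refine ⟨fun v hn hs => ⟨?_, ?_⟩, fun v => ?_⟩
  · obtain ⟨w, hvw, hw⟩ := hdescN v hn
    exact ⟨w, hvw, by rw [hdistN, hdistN, hw]⟩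
  · obtain ⟨w, hvw, hw⟩ := hdescS v hs
    exact ⟨w, hvw, by rw [hdistS, hdistS, hw]⟩
  · obtain ⟨p, hp⟩ := SimpleGraph.exists_walk_length_eq_of_descent hzeroN hdescN v
    obtain ⟨q, hq⟩ := SimpleGraph.exists_walk_length_eq_of_descent hzeroS hdescS v
    have hlen : (p.reverse.append q).length = 2 * r := by
      rw [SimpleGraph.Walk.length_append, SimpleGraph.Walk.length_reverse, hp, hq,
        northDepth_add_southDepth]
    refine ⟨p.reverse.append q, SimpleGraph.Walk.isPath_of_length_eq_dist _ ?_, hlen, by simp⟩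
    rw [hlen, hdistN]
    rfl

/-- In the triangulation `D*_{r,t}`, every vertex other than the poles `n`
and `s` has a neighbour of latitude one greater (one step closer to `n`) and
a neighbour of latitude one less (one step closer to `s`); consequently,
every vertex lies on some path of length `2r` from `n` to `s`. -/
theorem stmt_15 (r : ℕ) (hr : 2 ≤ r) (e : ℤ × ℤ → ℤ × ℤ)
    (he : Set.BijOn e (sphere r) (sphere r))
    (hadj : SphereAdjPreserving r e)
    (hcor : ∀ v ∈ sphere r, Corner r v → ¬ Corner r (e v)) :
    (∀ v : GluedV r e, v ≠ npole r e → v ≠ spole r e →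
      (∃ w, (Dstar r e).Adj v w ∧
        (Dstar r e).dist (npole r e) w + 1 = (Dstar r e).dist (npole r e) v) ∧
      (∃ w, (Dstar r e).Adj v w ∧
        (Dstar r e).dist (spole r e) w + 1 = (Dstar r e).dist (spole r e) v)) ∧
    (∀ v : GluedV r e, ∃ p : (Dstar r e).Walk (npole r e) (spole r e),
      p.IsPath ∧ p.length = 2 * r ∧ v ∈ p.support) :=
  stmt_15_general r e he
end
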